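/- arXiv:1511.01361 — 10 statements merged into one kernel-verified Lean document; each statement's English description precedes it below -/
import Mathlib

section
/- Let f(x,y) = 2xy, let ℓ(x,y) = u·x + v·y + w be an affine function on ℝ², and let T ⊆ ℝ² be the convex hull of three points p₁, p₂, p₃ ∈ ℝ². Then the maximum of the error |f(x,y) − ℓ(x,y)| over T is attained at some point of the union of the three closed segments [p₁,p₂] ∪ [p₂,p₃] ∪ [p₁,p₃]; in particular, it is never attained only in the interior of T. -/
/-!
On a horizontal line `y = c` the error `2xy - (ux + vy + w)` is affine in `x`, so its absolute
value is bounded on a horizontal chord by its values at the two ends. Every point of the triangle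
lies on a horizontal chord with both ends on edges: in barycentric coordinates there is a nonzero
direction `d` with `∑ dᵢ = 0` whose image in the plane is horizontal (three unknowns, two linear
equations), and moving along `±d` until a coordinate vanishes reaches an edge on either side.
Applying this to a maximiser of the error gives an edge point that is again a maximiser.
-/

open Set

variable {ι : Type*} [Fintype ι] {E : Type*} [AddCommGroup E] [Module ℝ E]

lemma exists_add_smul_nonneg_apply_eq_zero {a d : ι → ℝ} (ha : 0 ≤ a) (hd : ∃ i, d i < 0) :
    ∃ t : ℝ, 0 ≤ t ∧ 0 ≤ a + t • d ∧ ∃ i, (a + t • d) i = 0 := by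
  classical
  obtain ⟨i, hi, hmin⟩ := (Finset.univ.filter fun i => d i < 0).exists_min_image
    (fun i => a i / -d i) (by simpa [Finset.filter_nonempty_iff] using hd)
  have hdi : 0 < -d i := neg_pos.2 (Finset.mem_filter.1 hi).2
  refine ⟨a i / -d i, div_nonneg (ha i) hdi.le, fun j => ?_, i, ?_⟩
  · simp only [Pi.zero_apply, Pi.add_apply, Pi.smul_apply, smul_eq_mul]
    rcases le_or_gt 0 (d j) with hdj | hdj
    · exact add_nonneg (ha j) (mul_nonneg (div_nonneg (ha i) hdi.le) hdj)
    · have := (le_div_iff₀ (neg_pos.2 hdj)).1 (hmin j (by simpa using hdj))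
      linarith
  · simp only [Pi.add_apply, Pi.smul_apply, smul_eq_mul]
    field_simp [neg_ne_zero.1 hdi.ne']
    ring

lemma exists_neg_of_sum_eq_zero {d : ι → ℝ} (hd : d ≠ 0) (hsum : ∑ i, d i = 0) :
    ∃ i, d i < 0 := by
  by_contra! h
  exact hd ((Fintype.sum_eq_zero_iff_of_nonneg h).1 hsum)

lemma exists_boundary_chord_of_mem_stdSimplex {a d : ι → ℝ} (ha : a ∈ stdSimplex ℝ ι) (hd : d ≠ 0)
    (hsum : ∑ i, d i = 0) :
    ∃ b ∈ stdSimplex ℝ ι, ∃ c ∈ stdSimplex ℝ ι, (∃ i, b i = 0) ∧ (∃ j, c j = 0) ∧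
      b - c ∈ Submodule.span ℝ {d} ∧ a ∈ segment ℝ b c := by
  have hmem : ∀ t : ℝ, 0 ≤ a + t • d → a + t • d ∈ stdSimplex ℝ ι := fun t ht =>
    ⟨ht, by simp [Finset.sum_add_distrib, ← Finset.mul_sum, hsum, ha.2]⟩
  obtain ⟨s, hs, hb, hbi⟩ := exists_add_smul_nonneg_apply_eq_zero ha.1
    (exists_neg_of_sum_eq_zero hd hsum)
  obtain ⟨t, ht, hc, hcj⟩ := exists_add_smul_nonneg_apply_eq_zero ha.1
    (exists_neg_of_sum_eq_zero (neg_ne_zero.2 hd) (by simp [hsum]))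
  rw [smul_neg, ← neg_smul] at hc hcj
  refine ⟨_, hmem s hb, _, hmem (-t) hc, hbi, hcj, ?_, ?_⟩
  · exact Submodule.mem_span_singleton.2 ⟨s + t, by module⟩
  · rw [mem_segment_iff_sameRay, show a - (a + s • d) = s • -d by module,
      show a + -t • d - a = t • -d by module]
    exact (SameRay.sameRay_nonneg_smul_left (-d) hs).nonneg_smul_right ht

lemma exists_ne_zero_sum_eq_zero_sum_mul_eq_zero (y : ι → ℝ) (hι : 2 < Fintype.card ι) :
    ∃ d : ι → ℝ, d ≠ 0 ∧ ∑ i, d i = 0 ∧ ∑ i, d i * y i = 0 := by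
  obtain ⟨d, hd, hd0⟩ := Submodule.exists_mem_ne_zero_of_ne_bot
    (LinearMap.ker_ne_bot_of_finrank_lt (f := Fintype.linearCombination ℝ fun i => ((1 : ℝ), y i))
      (by simpa using hι))
  refine ⟨d, hd0, ?_⟩
  simpa [Fintype.linearCombination_apply, Prod.ext_iff, Prod.fst_sum, Prod.snd_sum] using hd

lemma convexHull_range_eq_image_stdSimplex (p : ι → E) :
    convexHull ℝ (range p) = Fintype.linearCombination ℝ p '' stdSimplex ℝ ι := by
  classical
  rw [← convexHull_rangle_single_eq_stdSimplex, LinearMap.image_convexHull, ← range_comp]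
  congr 2
  ext i
  simp [Fintype.linearCombination_apply_single]

lemma exists_level_chord_of_mem_convexHull (p : ι → E) (φ : E →ₗ[ℝ] ℝ)
    (hι : 2 < Fintype.card ι) {m : E} (hm : m ∈ convexHull ℝ (range p)) :
    ∃ b ∈ stdSimplex ℝ ι, ∃ c ∈ stdSimplex ℝ ι, (∃ i, b i = 0) ∧ (∃ j, c j = 0) ∧
      φ (Fintype.linearCombination ℝ p b) = φ (Fintype.linearCombination ℝ p c) ∧
      m ∈ segment ℝ (Fintype.linearCombination ℝ p b) (Fintype.linearCombination ℝ p c) := by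
  rw [convexHull_range_eq_image_stdSimplex] at hm
  obtain ⟨a, ha, rfl⟩ := hm
  obtain ⟨d, hd, hsum, hφd⟩ := exists_ne_zero_sum_eq_zero_sum_mul_eq_zero (fun i => φ (p i)) hι
  obtain ⟨b, hb, c, hc, hbi, hcj, hbc, hab⟩ := exists_boundary_chord_of_mem_stdSimplex ha hd hsum
  refine ⟨b, hb, c, hc, hbi, hcj, ?_, ?_⟩
  · obtain ⟨k, hk⟩ := Submodule.mem_span_singleton.1 hbc
    rw [← sub_eq_zero, ← map_sub, ← map_sub, ← hk]
    simp [Fintype.linearCombination_apply, hφd]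
  · obtain ⟨α, β, hα, hβ, hαβ, rfl⟩ := hab
    exact ⟨α, β, hα, hβ, hαβ, by simp⟩

lemma linearCombination_mem_edges_of_apply_eq_zero {p₁ p₂ p₃ : E} {b : Fin 3 → ℝ}
    (hb : b ∈ stdSimplex ℝ (Fin 3)) {i : Fin 3} (hi : b i = 0) :
    Fintype.linearCombination ℝ ![p₁, p₂, p₃] b ∈
      segment ℝ p₁ p₂ ∪ segment ℝ p₂ p₃ ∪ segment ℝ p₁ p₃ := by
  obtain ⟨hb0, hb1⟩ := hb
  simp only [Fin.sum_univ_three] at hb1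
  simp only [Fintype.linearCombination_apply, Fin.sum_univ_three, Matrix.cons_val]
  fin_cases i <;> dsimp at hi
  · exact .inl (.inr ⟨b 1, b 2, hb0 1, hb0 2, by linarith, by simp [hi]⟩)
  · exact .inr ⟨b 0, b 2, hb0 0, hb0 2, by linarith, by simp [hi]⟩
  · exact .inl (.inl ⟨b 0, b 1, hb0 0, hb0 1, by linarith, by simp [hi]⟩)

lemma exists_level_chord_of_mem_triangle (φ : E →ₗ[ℝ] ℝ) {p₁ p₂ p₃ m : E}
    (hm : m ∈ convexHull ℝ {p₁, p₂, p₃}) :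
    ∃ q₁ ∈ segment ℝ p₁ p₂ ∪ segment ℝ p₂ p₃ ∪ segment ℝ p₁ p₃,
      ∃ q₂ ∈ segment ℝ p₁ p₂ ∪ segment ℝ p₂ p₃ ∪ segment ℝ p₁ p₃,
        φ q₁ = φ q₂ ∧ m ∈ segment ℝ q₁ q₂ := by
  have : ({p₁, p₂, p₃} : Set E) = range ![p₁, p₂, p₃] := by
    rw [Matrix.range_cons, Matrix.range_cons_cons_empty, singleton_union]
  rw [this] at hm
  obtain ⟨b, hb, c, hc, ⟨i, hi⟩, ⟨j, hj⟩, hφ, hmbc⟩ :=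
    exists_level_chord_of_mem_convexHull _ φ (by simp) hm
  exact ⟨_, linearCombination_mem_edges_of_apply_eq_zero hb hi,
    _, linearCombination_mem_edges_of_apply_eq_zero hc hj, hφ, hmbc⟩

def saddleError (u v w : ℝ) (r : ℝ × ℝ) : ℝ := 2 * r.1 * r.2 - (u * r.1 + v * r.2 + w)

lemma continuous_saddleError (u v w : ℝ) : Continuous (saddleError u v w) := by
  unfold saddleError
  fun_prop

lemma abs_saddleError_le_max_of_snd_eq {u v w : ℝ} {q₁ q₂ m : ℝ × ℝ} (hq : q₁.2 = q₂.2)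
    (hm : m ∈ segment ℝ q₁ q₂) :
    |saddleError u v w m| ≤ max |saddleError u v w q₁| |saddleError u v w q₂| := by
  obtain ⟨α, β, hα, hβ, hαβ, rfl⟩ := hm
  have hline : saddleError u v w (α • q₁ + β • q₂) =
      α * saddleError u v w q₁ + β * saddleError u v w q₂ := by
    simp only [saddleError, Prod.fst_add, Prod.snd_add, Prod.smul_fst, Prod.smul_snd, smul_eq_mul,
      ← hq]
    rw [show β = 1 - α by linarith]
    ring
  rw [hline]
  simpa only [Real.norm_eq_abs, smul_eq_mul] using
    (convexOn_norm (E := ℝ) convex_univ).le_on_segment (mem_univ _) (mem_univ _)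
      ⟨α, β, hα, hβ, hαβ, rfl⟩

/-- The maximum vertical error between the saddle f(x,y) = 2xy and an affine function
ℓ(x,y) = ux + vy + w over a triangle T is attained on the union of the three edges;
in particular it is never attained only in the interior of T. -/
theorem stmt_3 (u v w : ℝ) (p₁ p₂ p₃ : ℝ × ℝ) :
    ∃ q ∈ segment ℝ p₁ p₂ ∪ segment ℝ p₂ p₃ ∪ segment ℝ p₁ p₃,
      ∀ r ∈ convexHull ℝ ({p₁, p₂, p₃} : Set (ℝ × ℝ)),
        |2*r.1*r.2 - (u*r.1 + v*r.2 + w)| ≤ |2*q.1*q.2 - (u*q.1 + v*q.2 + w)| := by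
  have hT : IsCompact (convexHull ℝ ({p₁, p₂, p₃} : Set (ℝ × ℝ))) :=
    (toFinite _).isCompact_convexHull ℝ
  obtain ⟨m, hmT, hmax⟩ := hT.exists_isMaxOn ⟨p₁, subset_convexHull ℝ _ (mem_insert _ _)⟩
    (continuous_saddleError u v w).abs.continuousOn
  obtain ⟨q₁, hq₁, q₂, hq₂, hq, hmq⟩ :=
    exists_level_chord_of_mem_triangle (LinearMap.snd ℝ ℝ ℝ) hmT
  rcases le_max_iff.1 (abs_saddleError_le_max_of_snd_eq (u := u) (v := v) (w := w) hq hmq)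
    with h | h
  · exact ⟨q₁, hq₁, fun r hr => (hmax hr).trans h⟩
  · exact ⟨q₂, hq₂, fun r hr => (hmax hr).trans h⟩
end

section
/- Let f(x,y) = 2xy, let p₁, p₂, p₃ ∈ ℝ² with pᵢ = (xᵢ, yᵢ), let T be their convex hull, and let ℓ be an affine function on ℝ² with ℓ(pᵢ) = f(pᵢ) for i = 1,2,3. Then the supremum of |ℓ(x,y) − f(x,y)| over (x,y) ∈ T equals (1/2)·max{ |(x₁−x₂)(y₁−y₂)| , |(x₂−x₃)(y₂−y₃)| , |(x₁−x₃)(y₁−y₃)| }. -/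
lemma key_aux (a c P Q e N : ℝ) (ha : 0 ≤ a) (hc : 0 ≤ c) (hac : a + c ≤ 1)
    (hd : 4*(P*Q) ≤ e^2) (hP : -N ≤ P) (hP' : P ≤ N) (hQ : -N ≤ Q) (hQ' : Q ≤ N)
    (hR : -N ≤ P+Q+e) (hR' : P+Q+e ≤ N) :
    4*(a*(1-a-c)*P + (1-a-c)*c*Q + a*c*(P+Q+e)) ≤ N := by
  have hb : 0 ≤ 1 - a - c := by linarith
  have hN : 0 ≤ N := by linarith
  rcases le_or_gt P 0 with hP0 | hP0
  · nlinarith [mul_nonneg (mul_nonneg ha hb) (neg_nonneg.2 hP0),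
      mul_nonneg (mul_nonneg hc hb) (sub_nonneg.2 hQ'),
      mul_nonneg (mul_nonneg ha hc) (sub_nonneg.2 hR'),
      mul_nonneg hN (sq_nonneg (1-2*c))]
  rcases le_or_gt Q 0 with hQ0 | hQ0
  · nlinarith [mul_nonneg (mul_nonneg hc hb) (neg_nonneg.2 hQ0),
      mul_nonneg (mul_nonneg ha hb) (sub_nonneg.2 hP'),
      mul_nonneg (mul_nonneg ha hc) (sub_nonneg.2 hR'),
      mul_nonneg hN (sq_nonneg (1-2*a))]
  rcases le_or_gt 0 e with he | he
  · rcases le_total c a with hca | hca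
    · nlinarith [mul_nonneg (mul_nonneg hb hQ0.le) (sub_nonneg.2 hca),
        mul_nonneg (mul_nonneg ha hb) (sub_nonneg.2 hR'),
        mul_nonneg (mul_nonneg ha hb) he,
        mul_nonneg (mul_nonneg ha hc) (sub_nonneg.2 hR'),
        mul_nonneg hN (sq_nonneg (1-2*a))]
    · nlinarith [mul_nonneg (mul_nonneg hb hP0.le) (sub_nonneg.2 hca),
        mul_nonneg (mul_nonneg hc hb) (sub_nonneg.2 hR'),
        mul_nonneg (mul_nonneg hc hb) he,
        mul_nonneg (mul_nonneg ha hc) (sub_nonneg.2 hR'),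
        mul_nonneg hN (sq_nonneg (1-2*c))]
  · obtain ⟨p, hp, rfl⟩ : ∃ p, 0 ≤ p ∧ p^2 = P :=
      ⟨Real.sqrt P, Real.sqrt_nonneg _, Real.sq_sqrt hP0.le⟩
    obtain ⟨q, hq, rfl⟩ : ∃ q, 0 ≤ q ∧ q^2 = Q :=
      ⟨Real.sqrt Q, Real.sqrt_nonneg _, Real.sq_sqrt hQ0.le⟩
    have hepq : e ≤ -(2*p*q) := by
      nlinarith [mul_nonneg hp hq, sq_nonneg (e + 2*p*q), sq_nonneg (e - 2*p*q)]
    rcases le_total q p with hqp | hqp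
    · nlinarith [sq_nonneg (p - 2*(a*p + c*q)),
        mul_nonneg (mul_nonneg hc hq) (sub_nonneg.2 hqp),
        mul_nonneg (mul_nonneg ha hc) (by linarith : 0 ≤ -(2*p*q) - e),
        sub_nonneg.2 hP']
    · nlinarith [sq_nonneg (q - 2*(a*p + c*q)),
        mul_nonneg (mul_nonneg ha hp) (sub_nonneg.2 hqp),
        mul_nonneg (mul_nonneg ha hc) (by linarith : 0 ≤ -(2*p*q) - e),
        sub_nonneg.2 hQ']

lemma key_abs (a c P Q R N : ℝ) (ha : 0 ≤ a) (hc : 0 ≤ c) (hac : a + c ≤ 1)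
    (hd : 4*(P*Q) ≤ (R - P - Q)^2) (hP : |P| ≤ N) (hQ : |Q| ≤ N) (hR : |R| ≤ N) :
    |4*(a*(1-a-c)*P + (1-a-c)*c*Q + a*c*R)| ≤ N := by
  rw [abs_le] at hP hQ hR ⊢
  constructor
  · have := key_aux a c (-P) (-Q) (-(R-P-Q)) N ha hc hac (by nlinarith)
      (by linarith) (by linarith) (by linarith) (by linarith) (by linarith) (by linarith)
    nlinarith [this]
  · have := key_aux a c P Q (R-P-Q) N ha hc hac (by nlinarith)
      (by linarith) (by linarith) (by linarith) (by linarith) (by linarith) (by linarith)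
    nlinarith [this]

set_option maxHeartbeats 1000000 in
/-- For the saddle f(x,y) = 2xy and the interpolating affine function ℓ on the triangle
with vertices p₁, p₂, p₃, the maximal vertical error over the triangle equals
(1/2)·max over the edges of |(xᵢ-xⱼ)(yᵢ-yⱼ)|. -/
theorem stmt_4 (p₁ p₂ p₃ : ℝ × ℝ) (ℓ : ℝ × ℝ → ℝ) (u v w : ℝ)
    (hℓ : ∀ q : ℝ × ℝ, ℓ q = u*q.1 + v*q.2 + w)
    (h₁ : ℓ p₁ = 2*p₁.1*p₁.2) (h₂ : ℓ p₂ = 2*p₂.1*p₂.2) (h₃ : ℓ p₃ = 2*p₃.1*p₃.2) :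
    IsGreatest {E : ℝ | ∃ q ∈ convexHull ℝ ({p₁, p₂, p₃} : Set (ℝ × ℝ)),
        E = |ℓ q - 2*q.1*q.2|}
      ((1/2) * max (max |(p₁.1-p₂.1)*(p₁.2-p₂.2)| |(p₂.1-p₃.1)*(p₂.2-p₃.2)|)
        |(p₁.1-p₃.1)*(p₁.2-p₃.2)|) := by
  have h₁' : u*p₁.1 + v*p₁.2 + w = 2*p₁.1*p₁.2 := (hℓ p₁).symm.trans h₁
  have h₂' : u*p₂.1 + v*p₂.2 + w = 2*p₂.1*p₂.2 := (hℓ p₂).symm.trans h₂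
  have h₃' : u*p₃.1 + v*p₃.2 + w = 2*p₃.1*p₃.2 := (hℓ p₃).symm.trans h₃
  constructor
  · -- membership : the value is attained at a midpoint of the maximizing edge
    have main : ∀ pa pb : ℝ × ℝ, pa ∈ ({p₁, p₂, p₃} : Set (ℝ × ℝ)) →
        pb ∈ ({p₁, p₂, p₃} : Set (ℝ × ℝ)) →
        u*pa.1 + v*pa.2 + w = 2*pa.1*pa.2 → u*pb.1 + v*pb.2 + w = 2*pb.1*pb.2 →
        ∃ q ∈ convexHull ℝ ({p₁, p₂, p₃} : Set (ℝ × ℝ)),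
          (1/2) * |(pa.1-pb.1)*(pa.2-pb.2)| = |ℓ q - 2*q.1*q.2| := by
      intro pa pb hpa hpb ha hb
      refine ⟨(1/2 : ℝ) • pa + (1/2 : ℝ) • pb,
        (convex_convexHull ℝ _) (subset_convexHull ℝ _ hpa) (subset_convexHull ℝ _ hpb)
          (by norm_num) (by norm_num) (by norm_num), ?_⟩
      have hx : ((1/2 : ℝ) • pa + (1/2 : ℝ) • pb).1 = (1/2)*pa.1 + (1/2)*pb.1 := by simp
      have hy : ((1/2 : ℝ) • pa + (1/2 : ℝ) • pb).2 = (1/2)*pa.2 + (1/2)*pb.2 := by simp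
      rw [hℓ, hx, hy]
      have key : u*((1/2)*pa.1 + (1/2)*pb.1) + v*((1/2)*pa.2 + (1/2)*pb.2) + w
          - 2*((1/2)*pa.1 + (1/2)*pb.1)*((1/2)*pa.2 + (1/2)*pb.2)
          = (1/2)*((pa.1-pb.1)*(pa.2-pb.2)) := by linear_combination ha/2 + hb/2
      rw [key, abs_mul ((1:ℝ)/2), abs_of_nonneg (by norm_num : (0:ℝ) ≤ 1/2)]
    have m1 : p₁ ∈ ({p₁, p₂, p₃} : Set (ℝ × ℝ)) := by simp
    have m2 : p₂ ∈ ({p₁, p₂, p₃} : Set (ℝ × ℝ)) := by simp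
    have m3 : p₃ ∈ ({p₁, p₂, p₃} : Set (ℝ × ℝ)) := by simp
    rcases max_choice (max |(p₁.1-p₂.1)*(p₁.2-p₂.2)| |(p₂.1-p₃.1)*(p₂.2-p₃.2)|)
      |(p₁.1-p₃.1)*(p₁.2-p₃.2)| with hm | hm
    · rw [hm]
      rcases max_choice |(p₁.1-p₂.1)*(p₁.2-p₂.2)| |(p₂.1-p₃.1)*(p₂.2-p₃.2)| with hm2 | hm2
      · rw [hm2]; exact main p₁ p₂ m1 m2 h₁' h₂'
      · rw [hm2]; exact main p₂ p₃ m2 m3 h₂' h₃'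
    · rw [hm]; exact main p₁ p₃ m1 m3 h₁' h₃'
  · -- upper bound
    rintro E ⟨q, hq, rfl⟩
    rw [show ({p₁, p₂, p₃} : Set (ℝ × ℝ)) = insert p₁ {p₂, p₃} from rfl,
      convexHull_insert ⟨p₂, by simp⟩, convexHull_pair] at hq
    rw [mem_convexJoin] at hq
    obtain ⟨x1, hx1, z, hz, hqz⟩ := hq
    rw [Set.mem_singleton_iff] at hx1
    subst x1
    obtain ⟨sb, sc, hsb, hsc, hs1, rfl⟩ := hz
    obtain ⟨ta, tb, hta, htb, ht1, rfl⟩ := hqz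
    have hsc' : sc = 1 - sb := by linarith
    have htb' : tb = 1 - ta := by linarith
    subst hsc' htb'
    have hx : (ta • p₁ + (1-ta) • (sb • p₂ + (1-sb) • p₃)).1
        = ta*p₁.1 + (1-ta)*(sb*p₂.1 + (1-sb)*p₃.1) := by simp; ring
    have hy : (ta • p₁ + (1-ta) • (sb • p₂ + (1-sb) • p₃)).2
        = ta*p₁.2 + (1-ta)*(sb*p₂.2 + (1-sb)*p₃.2) := by simp; ring
    have hval : ℓ (ta • p₁ + (1-ta) • (sb • p₂ + (1-sb) • p₃))
        - 2*(ta • p₁ + (1-ta) • (sb • p₂ + (1-sb) • p₃)).1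
          * (ta • p₁ + (1-ta) • (sb • p₂ + (1-sb) • p₃)).2
        = (1/2) * (4*(ta*(1 - ta - (1-ta)*(1-sb))*((p₁.1-p₂.1)*(p₁.2-p₂.2))
            + (1 - ta - (1-ta)*(1-sb))*((1-ta)*(1-sb))*((p₂.1-p₃.1)*(p₂.2-p₃.2))
            + ta*((1-ta)*(1-sb))*((p₁.1-p₃.1)*(p₁.2-p₃.2)))) := by
      rw [hℓ, hx, hy]
      linear_combination ta*h₁' + ((1-ta)*sb)*h₂' + ((1-ta)*(1-sb))*h₃'
    rw [hval, abs_mul, abs_of_nonneg (by norm_num : (0:ℝ) ≤ 1/2)]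
    have hc : 0 ≤ (1-ta)*(1-sb) := mul_nonneg (by linarith) (by linarith)
    have hac : ta + (1-ta)*(1-sb) ≤ 1 := by nlinarith [mul_nonneg (by linarith : (0:ℝ) ≤ 1-ta) hsb]
    have hd : 4*(((p₁.1-p₂.1)*(p₁.2-p₂.2)) * ((p₂.1-p₃.1)*(p₂.2-p₃.2)))
        ≤ ((p₁.1-p₃.1)*(p₁.2-p₃.2) - (p₁.1-p₂.1)*(p₁.2-p₂.2) - (p₂.1-p₃.1)*(p₂.2-p₃.2))^2 := by
      linarith [sq_nonneg ((p₁.1-p₂.1)*(p₂.2-p₃.2) - (p₂.1-p₃.1)*(p₁.2-p₂.2))]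
    refine mul_le_mul_of_nonneg_left ?_ (by norm_num)
    exact key_abs ta ((1-ta)*(1-sb)) _ _ _ _ hta hc hac hd
      (le_trans (le_max_left _ _) (le_max_left _ _))
      (le_trans (le_max_right _ _) (le_max_left _ _))
      (le_max_right _ _)
end

section
/- Fix ε > 0. For pᵢ = (xᵢ,yᵢ) ∈ ℝ², i = 1,2,3, consider the constraints |(xᵢ−xⱼ)(yᵢ−yⱼ)| ≤ 2ε for each of the three pairs {i,j} ⊆ {1,2,3}. If the triple (p₁, p₂, p₃) satisfies these constraints and its triangle area (1/2)·|(x₂−x₁)(y₃−y₁) − (x₃−x₁)(y₂−y₁)| is greater than or equal to the area of every other triple satisfying the constraints, then all three constraints hold with equality: |(xᵢ−xⱼ)(yᵢ−yⱼ)| = 2ε for each pair {i,j}. -/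
lemma aux_sq (s P Q R : ℝ) (hP : P^2 ≤ s^2) (hQ : Q^2 ≤ s^2) (hR : R^2 ≤ s^2)
    (h : 5*s^2 ≤ P^2+Q^2+R^2 - 2*(P*Q+Q*R+R*P)) : P^2 = s^2 := by
  nlinarith [sq_nonneg (P+Q), sq_nonneg (P+R), sq_nonneg (Q+R), sq_nonneg (P-Q),
    sq_nonneg (P-R), sq_nonneg (Q-R), mul_nonneg (sub_nonneg.2 hQ) (sub_nonneg.2 hR),
    mul_nonneg (sub_nonneg.2 hP) (sub_nonneg.2 hQ), mul_nonneg (sub_nonneg.2 hP) (sub_nonneg.2 hR),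
    sq_nonneg (P+Q+R), sq_nonneg (P+Q-R), sq_nonneg (P-Q+R), sq_nonneg (P-Q-R)]

lemma aux_abs (ε P : ℝ) (hε : 0 < ε) (hP : |P| ≤ 2*ε) (h : P^2 = (2*ε)^2) : |P| = 2*ε := by
  refine le_antisymm hP ?_
  nlinarith [sq_abs P, abs_nonneg P]

lemma main_ineq (ε P Q R D : ℝ) (hε : 0 < ε)
    (hP : |P| ≤ 2*ε) (hQ : |Q| ≤ 2*ε) (hR : |R| ≤ 2*ε)
    (hid : D^2 = P^2+Q^2+R^2 - 2*(P*Q+Q*R+R*P)) (hD : 20*ε^2 ≤ D^2) :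
    |P| = 2*ε ∧ |Q| = 2*ε ∧ |R| = 2*ε := by
  have h5 : 5*(2*ε)^2 ≤ P^2+Q^2+R^2 - 2*(P*Q+Q*R+R*P) := by nlinarith
  have sqP : P^2 ≤ (2*ε)^2 := by nlinarith [sq_abs P, abs_nonneg P]
  have sqQ : Q^2 ≤ (2*ε)^2 := by nlinarith [sq_abs Q, abs_nonneg Q]
  have sqR : R^2 ≤ (2*ε)^2 := by nlinarith [sq_abs R, abs_nonneg R]
  exact ⟨aux_abs ε P hε hP (aux_sq (2*ε) P Q R sqP sqQ sqR h5),
         aux_abs ε Q hε hQ (aux_sq (2*ε) Q P R sqQ sqP sqR (by linear_combination h5)),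
         aux_abs ε R hε hR (aux_sq (2*ε) R P Q sqR sqP sqQ (by linear_combination h5))⟩

/-- In a triangle of maximum area subject to the edge constraints
|(xᵢ-xⱼ)(yᵢ-yⱼ)| ≤ 2ε, each constraint must hold with equality. -/
theorem stmt_6 (ε : ℝ) (hε : 0 < ε) (p₁ p₂ p₃ : ℝ × ℝ)
    (h₁₂ : |(p₁.1-p₂.1)*(p₁.2-p₂.2)| ≤ 2*ε)
    (h₂₃ : |(p₂.1-p₃.1)*(p₂.2-p₃.2)| ≤ 2*ε)
    (h₁₃ : |(p₁.1-p₃.1)*(p₁.2-p₃.2)| ≤ 2*ε)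
    (hmax : ∀ q₁ q₂ q₃ : ℝ × ℝ,
      |(q₁.1-q₂.1)*(q₁.2-q₂.2)| ≤ 2*ε →
      |(q₂.1-q₃.1)*(q₂.2-q₃.2)| ≤ 2*ε →
      |(q₁.1-q₃.1)*(q₁.2-q₃.2)| ≤ 2*ε →
      (1/2) * |(q₂.1-q₁.1)*(q₃.2-q₁.2) - (q₃.1-q₁.1)*(q₂.2-q₁.2)| ≤
      (1/2) * |(p₂.1-p₁.1)*(p₃.2-p₁.2) - (p₃.1-p₁.1)*(p₂.2-p₁.2)|) :
    |(p₁.1-p₂.1)*(p₁.2-p₂.2)| = 2*ε ∧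
    |(p₂.1-p₃.1)*(p₂.2-p₃.2)| = 2*ε ∧
    |(p₁.1-p₃.1)*(p₁.2-p₃.2)| = 2*ε := by
  have hs : (Real.sqrt 5)^2 = 5 := Real.sq_sqrt (by norm_num)
  have hs0 : (0:ℝ) ≤ Real.sqrt 5 := Real.sqrt_nonneg 5
  set s : ℝ := Real.sqrt 5
  have key := hmax (0, 0) (ε*(1+s), (s-1)/2) (2*ε, -1)
    (by
      show |((0:ℝ) - ε*(1+s)) * ((0:ℝ) - (s-1)/2)| ≤ 2*ε
      have e : ((0:ℝ) - ε*(1+s)) * ((0:ℝ) - (s-1)/2) = 2*ε := by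
        linear_combination (ε/2) * hs
      rw [e, abs_of_pos (by positivity)])
    (by
      show |(ε*(1+s) - 2*ε) * ((s-1)/2 - (-1 : ℝ))| ≤ 2*ε
      have e : (ε*(1+s) - 2*ε) * ((s-1)/2 - (-1 : ℝ)) = 2*ε := by
        linear_combination (ε/2) * hs
      rw [e, abs_of_pos (by positivity)])
    (by
      show |((0:ℝ) - 2*ε) * ((0:ℝ) - (-1:ℝ))| ≤ 2*ε
      have e : ((0:ℝ) - 2*ε) * ((0:ℝ) - (-1:ℝ)) = -(2*ε) := by ring
      rw [e, abs_neg, abs_of_pos (by positivity)])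
  have eD : (ε*(1+s) - (0:ℝ)) * ((-1:ℝ) - (0:ℝ)) - (2*ε - (0:ℝ)) * ((s-1)/2 - (0:ℝ))
      = -(2*ε*s) := by ring
  rw [show ((ε*(1+s), (s-1)/2) : ℝ × ℝ).1 = ε*(1+s) from rfl] at key
  simp only at key
  rw [eD, abs_neg, abs_of_nonneg (by positivity)] at key
  set D : ℝ := (p₂.1-p₁.1)*(p₃.2-p₁.2) - (p₃.1-p₁.1)*(p₂.2-p₁.2) with hD_def
  have h1 : 2*ε*s ≤ |D| := by linarith
  have hD : 20*ε^2 ≤ D^2 := by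
    have h2 : (2*ε*s)^2 ≤ |D|^2 := by
      have := mul_nonneg (mul_nonneg (by norm_num : (0:ℝ) ≤ 2) hε.le) hs0
      nlinarith
    rw [sq_abs] at h2
    nlinarith
  exact main_ineq ε _ _ _ D hε h₁₂ h₂₃ h₁₃ (by rw [hD_def]; ring) hD
end

section
/- Fix ε > 0 and let pᵢ = (xᵢ,yᵢ) ∈ ℝ², i = 1,2,3, satisfy |(xᵢ−xⱼ)(yᵢ−yⱼ)| ≤ 2ε for each of the three pairs {i,j} ⊆ {1,2,3}. Then the area of the triangle p₁p₂p₃, namely (1/2)·|(x₂−x₁)(y₃−y₁) − (x₃−x₁)(y₂−y₁)|, is at most ε·√5. -/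
lemma key_ineq (t P Q R : ℝ) (ht : 0 < t)
    (hP : -t ≤ P) (hP' : P ≤ t) (hQ : -t ≤ Q) (hQ' : Q ≤ t)
    (hR : -t ≤ R) (hR' : R ≤ t) :
    (P + Q - R)^2 - 4*P*Q ≤ 5*t^2 := by
  have hA : 0 ≤ (t-P)*((t-Q)*(t-R)) :=
    mul_nonneg (by linarith) (mul_nonneg (by linarith) (by linarith))
  have hB : 0 ≤ (t+P)*((t+Q)*(t+R)) :=
    mul_nonneg (by linarith) (mul_nonneg (by linarith) (by linarith))
  have h1 : 0 ≤ t*((t-P)*(t+P)) := mul_nonneg ht.le (mul_nonneg (by linarith) (by linarith))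
  have h2 : 0 ≤ t*((t-Q)*(t+Q)) := mul_nonneg ht.le (mul_nonneg (by linarith) (by linarith))
  have h3 : 0 ≤ t*((t-R)*(t+R)) := mul_nonneg ht.le (mul_nonneg (by linarith) (by linarith))
  have key : t * (5*t^2 - ((P + Q - R)^2 - 4*P*Q)) =
      (t-P)*((t-Q)*(t-R)) + (t+P)*((t+Q)*(t+R))
      + t*((t-P)*(t+P)) + t*((t-Q)*(t+Q)) + t*((t-R)*(t+R)) := by ring
  have hpos : 0 ≤ t * (5*t^2 - ((P + Q - R)^2 - 4*P*Q)) := by rw [key]; linarith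
  nlinarith [mul_pos ht ht]

/-- Any triangle satisfying the interpolation error constraints
|(xᵢ-xⱼ)(yᵢ-yⱼ)| ≤ 2ε on all three edges has area at most ε·√5. -/
theorem stmt_7 (ε : ℝ) (hε : 0 < ε) (p₁ p₂ p₃ : ℝ × ℝ)
    (h₁₂ : |(p₁.1-p₂.1)*(p₁.2-p₂.2)| ≤ 2*ε)
    (h₂₃ : |(p₂.1-p₃.1)*(p₂.2-p₃.2)| ≤ 2*ε)
    (h₁₃ : |(p₁.1-p₃.1)*(p₁.2-p₃.2)| ≤ 2*ε) :
    (1/2) * |(p₂.1-p₁.1)*(p₃.2-p₁.2) - (p₃.1-p₁.1)*(p₂.2-p₁.2)| ≤ ε * Real.sqrt 5 := by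
  set P := (p₁.1-p₂.1)*(p₁.2-p₂.2) with hPdef
  set R := (p₂.1-p₃.1)*(p₂.2-p₃.2) with hRdef
  set Q := (p₁.1-p₃.1)*(p₁.2-p₃.2) with hQdef
  set D := (p₂.1-p₁.1)*(p₃.2-p₁.2) - (p₃.1-p₁.1)*(p₂.2-p₁.2) with hDdef
  obtain ⟨hP, hP'⟩ := abs_le.1 h₁₂
  obtain ⟨hQ, hQ'⟩ := abs_le.1 h₁₃
  obtain ⟨hR, hR'⟩ := abs_le.1 h₂₃
  have hid : D^2 = (P + Q - R)^2 - 4*P*Q := by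
    simp only [hDdef, hPdef, hQdef, hRdef]; ring
  have hD2 : D^2 ≤ 20*ε^2 := by
    have := key_ineq (2*ε) P Q R (by linarith) hP hP' hQ hQ' hR hR'
    nlinarith
  have hs : Real.sqrt 5 ^ 2 = 5 := Real.sq_sqrt (by norm_num)
  have hs0 : 0 ≤ Real.sqrt 5 := Real.sqrt_nonneg 5
  have habs : |D|^2 = D^2 := sq_abs D
  have habs0 : 0 ≤ |D| := abs_nonneg D
  nlinarith [sq_nonneg (|D| - 2*ε*Real.sqrt 5), mul_pos hε hε, mul_nonneg hε.le hs0]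
end

section
/- Fix ε > 0 and let f(x,y) = 2xy. Let p₁ = (0,0), p₂ = (√(ε/2)·(√5+1), √(ε/2)·(√5−1)), p₃ = (√(ε/2)·(√5−1), √(ε/2)·(√5+1)), let T be their convex hull, and let ℓ be the affine function with ℓ(pᵢ) = f(pᵢ) for i = 1,2,3. Then: (i) the area of T equals ε·√5; (ii) for each pair i ≠ j one has |f(pᵢ−pⱼ)| = 4ε; and (iii) sup over (x,y) ∈ T of |ℓ(x,y) − f(x,y)| equals ε. -/
set_option maxHeartbeats 1000000 in
/-- The optimal interpolating triangle for the saddle f(x,y) = 2xy: it has area ε·√5,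
every edge satisfies |f(pᵢ-pⱼ)| = 4ε, and the maximal vertical error over the
triangle equals ε. -/
theorem stmt_8 (ε : ℝ) (hε : 0 < ε) (p₁ p₂ p₃ : ℝ × ℝ)
    (hp₁ : p₁ = (0, 0))
    (hp₂ : p₂ = (Real.sqrt (ε/2) * (Real.sqrt 5 + 1), Real.sqrt (ε/2) * (Real.sqrt 5 - 1)))
    (hp₃ : p₃ = (Real.sqrt (ε/2) * (Real.sqrt 5 - 1), Real.sqrt (ε/2) * (Real.sqrt 5 + 1)))
    (ℓ : ℝ × ℝ → ℝ) (u v w : ℝ) (hℓ : ∀ q : ℝ × ℝ, ℓ q = u*q.1 + v*q.2 + w)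
    (h₁ : ℓ p₁ = 2*p₁.1*p₁.2) (h₂ : ℓ p₂ = 2*p₂.1*p₂.2) (h₃ : ℓ p₃ = 2*p₃.1*p₃.2) :
    (1/2) * |(p₂.1-p₁.1)*(p₃.2-p₁.2) - (p₃.1-p₁.1)*(p₂.2-p₁.2)| = ε * Real.sqrt 5 ∧
    (|2*(p₁.1-p₂.1)*(p₁.2-p₂.2)| = 4*ε ∧ |2*(p₂.1-p₃.1)*(p₂.2-p₃.2)| = 4*ε ∧
      |2*(p₁.1-p₃.1)*(p₁.2-p₃.2)| = 4*ε) ∧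
    IsGreatest {E : ℝ | ∃ q ∈ convexHull ℝ ({p₁, p₂, p₃} : Set (ℝ × ℝ)),
        E = |ℓ q - 2*q.1*q.2|} ε := by
  subst hp₁ hp₂ hp₃
  set s := Real.sqrt (ε/2) with hs
  set a := Real.sqrt 5 with ha
  have hs0 : 0 < s := Real.sqrt_pos.2 (by linarith)
  have ha0 : 0 < a := Real.sqrt_pos.2 (by norm_num)
  have hs2 : s^2 = ε/2 := Real.sq_sqrt (by linarith)
  have ha2 : a^2 = 5 := Real.sq_sqrt (by norm_num)
  have ha1 : 1 < a := by nlinarith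
  -- determine the affine coefficients
  have hw : w = 0 := by have := h₁; rw [hℓ] at this; simpa using this
  have e₂ : u*(s*(a+1)) + v*(s*(a-1)) = 8*s^2 := by
    have h := h₂; rw [hℓ] at h; simp only [Prod.fst, Prod.snd] at h
    linear_combination h - hw + 2*s^2*ha2
  have e₃ : u*(s*(a-1)) + v*(s*(a+1)) = 8*s^2 := by
    have h := h₃; rw [hℓ] at h; simp only [Prod.fst, Prod.snd] at h
    linear_combination h - hw + 2*s^2*ha2
  have huv : u = v := by
    have h : (u - v)*(2*s) = 0 := by linear_combination e₂ - e₃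
    rcases mul_eq_zero.1 h with h | h
    · linarith [sub_eq_zero.1 h]
    · linarith
  have hua : u * a = 4*s := by
    have h : (u*a - 4*s)*(2*s) = 0 := by linear_combination e₂ + (s*(a-1))*huv
    rcases mul_eq_zero.1 h with h | h
    · linarith [sub_eq_zero.1 h]
    · linarith
  refine ⟨?_, ⟨?_, ?_, ?_⟩, ?_, ?_⟩
  · -- area
    have h : (s*(a+1)-0)*(s*(a+1)-0) - (s*(a-1)-0)*(s*(a-1)-0) = 4*s^2*a := by ring
    simp only [Prod.fst, Prod.snd]
    rw [h, abs_of_nonneg (by positivity)]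
    linear_combination 2*a*hs2
  · simp only [Prod.fst, Prod.snd]
    rw [show 2*(0-s*(a+1))*(0-s*(a-1)) = 2*s^2*(a^2-1) by ring, ha2, hs2]; rw [abs_of_nonneg] <;> linarith
  · simp only [Prod.fst, Prod.snd]
    rw [show 2*(s*(a+1)-s*(a-1))*(s*(a-1)-s*(a+1)) = -(8*s^2) by ring, hs2]
    rw [abs_neg, abs_of_nonneg] <;> linarith
  · simp only [Prod.fst, Prod.snd]
    rw [show 2*(0-s*(a-1))*(0-s*(a+1)) = 2*s^2*(a^2-1) by ring, ha2, hs2]; rw [abs_of_nonneg] <;> linarith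
  · -- ε is attained, at the midpoint of the edge p₁p₂
    refine ⟨(s*(a+1)/2, s*(a-1)/2), ?_, ?_⟩
    · apply segment_subset_convexHull (Set.mem_insert _ _)
        (Set.mem_insert_of_mem _ (Set.mem_insert _ _))
      exact ⟨1/2, 1/2, by norm_num, by norm_num, by norm_num,
        by simp [Prod.ext_iff]; constructor <;> ring⟩
    · rw [hℓ]
      have h : u*(s*(a+1)/2) + v*(s*(a-1)/2) + w - 2*(s*(a+1)/2)*(s*(a-1)/2) = ε := by
        linear_combination s*hua - (s*(a-1)/2)*huv + hw + 2*hs2 - (s^2/2)*ha2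
      simp only [Prod.fst, Prod.snd]
      rw [h, abs_of_pos hε]
  · -- upper bound
    rintro E ⟨q, hq, rfl⟩
    rw [show ({((0:ℝ),(0:ℝ)), (s*(a+1), s*(a-1)), (s*(a-1), s*(a+1))} : Set (ℝ × ℝ)) =
      insert ((0:ℝ),(0:ℝ)) {(s*(a+1), s*(a-1)), (s*(a-1), s*(a+1))} from rfl,
      convexHull_insert ⟨_, Set.mem_insert _ _⟩, convexHull_pair] at hq
    rw [mem_convexJoin] at hq
    obtain ⟨x, hx, z, hz, hqseg⟩ := hq
    rw [Set.mem_singleton_iff] at hx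
    subst hx
    obtain ⟨c, d, hc, hd, hcd, rfl⟩ := hz
    obtain ⟨e, t, he, ht, het, rfl⟩ := hqseg
    have hq1 : (e • ((0:ℝ),(0:ℝ)) + t • (c • ((s*(a+1)), (s*(a-1))) + d • ((s*(a-1)), (s*(a+1))))).1
        = (t*c)*(s*(a+1)) + (t*d)*(s*(a-1)) := by
      simp [Prod.smul_mk]; ring
    have hq2 : (e • ((0:ℝ),(0:ℝ)) + t • (c • ((s*(a+1)), (s*(a-1))) + d • ((s*(a-1)), (s*(a+1))))).2
        = (t*c)*(s*(a-1)) + (t*d)*(s*(a+1)) := by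
      simp [Prod.smul_mk]; ring
    set α := t*c with hα
    set β := t*d with hβ
    have hα0 : 0 ≤ α := mul_nonneg ht hc
    have hβ0 : 0 ≤ β := mul_nonneg ht hd
    have hαβ : α + β ≤ 1 := by
      have : α + β = t := by rw [hα, hβ]; nlinarith
      linarith
    rw [hℓ, hq1, hq2]
    have key : u*(α*(s*(a+1)) + β*(s*(a-1))) + v*(α*(s*(a-1)) + β*(s*(a+1))) + w
        - 2*(α*(s*(a+1)) + β*(s*(a-1)))*(α*(s*(a-1)) + β*(s*(a+1)))
        = 4*ε*((α+β) - (α+β)^2 - α*β) := by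
      linear_combination (2*s*(α+β))*hua - (α*(s*(a-1)) + β*(s*(a+1)))*huv + hw
        + (-2*s^2*(α^2+β^2) - 4*s^2*α*β)*ha2
        + (8*((α+β) - (α+β)^2 - α*β))*hs2
    rw [key, abs_mul, abs_of_nonneg (by linarith : (0:ℝ) ≤ 4*ε)]
    have hb : |(α+β) - (α+β)^2 - α*β| ≤ 1/4 := by
      rw [abs_le]
      constructor
      · nlinarith [sq_nonneg (α - β), sq_nonneg (α+β-1), mul_nonneg hα0 hβ0]
      · nlinarith [sq_nonneg (α + β - 1/2), mul_nonneg hα0 hβ0]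
    calc 4*ε * |(α+β) - (α+β)^2 - α*β| ≤ 4*ε * (1/4) := by
          apply mul_le_mul_of_nonneg_left hb (by linarith)
      _ = ε := by ring
end

section
/- Fix ε > 0 and let f(x,y) = 2xy. Let p₁ = (0,0), p₂ = (√(2ε)·(1+1/√3), √(2ε)·(1−1/√3)), p₃ = (√(2ε)·(1−1/√3), √(2ε)·(1+1/√3)), let T be their convex hull, and let ℓ be the affine function with ℓ(pᵢ) = f(pᵢ) + ε/3 for i = 1,2,3 (common vertical offset Δz = ε/3). Then: (i) the area of T equals 4ε/√3; and (ii) sup over (x,y) ∈ T of |ℓ(x,y) − f(x,y)| equals ε. In particular, since 4ε/√3 > ε·√5, this non-interpolating approximation beats the optimal interpolating approximation. -/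
set_option maxHeartbeats 1000000 in
/-- The optimal non-interpolating triangle for the saddle f(x,y) = 2xy with common
vertex offset Δz = ε/3: its area is 4ε/√3, the maximal vertical error over the triangle
is exactly ε, and 4ε/√3 > ε·√5, beating the optimal interpolating approximation. -/
theorem stmt_10 (ε : ℝ) (hε : 0 < ε) (p₁ p₂ p₃ : ℝ × ℝ)
    (hp₁ : p₁ = (0, 0))
    (hp₂ : p₂ = (Real.sqrt (2*ε) * (1 + 1/Real.sqrt 3),
                 Real.sqrt (2*ε) * (1 - 1/Real.sqrt 3)))
    (hp₃ : p₃ = (Real.sqrt (2*ε) * (1 - 1/Real.sqrt 3),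
                 Real.sqrt (2*ε) * (1 + 1/Real.sqrt 3)))
    (ℓ : ℝ × ℝ → ℝ) (u v w : ℝ) (hℓ : ∀ q : ℝ × ℝ, ℓ q = u*q.1 + v*q.2 + w)
    (h₁ : ℓ p₁ = 2*p₁.1*p₁.2 + ε/3) (h₂ : ℓ p₂ = 2*p₂.1*p₂.2 + ε/3)
    (h₃ : ℓ p₃ = 2*p₃.1*p₃.2 + ε/3) :
    (1/2) * |(p₂.1-p₁.1)*(p₃.2-p₁.2) - (p₃.1-p₁.1)*(p₂.2-p₁.2)| = 4*ε/Real.sqrt 3 ∧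
    IsGreatest {E : ℝ | ∃ q ∈ convexHull ℝ ({p₁, p₂, p₃} : Set (ℝ × ℝ)),
        E = |ℓ q - 2*q.1*q.2|} ε ∧
    4*ε/Real.sqrt 3 > ε * Real.sqrt 5 := by
  subst hp₁ hp₂ hp₃
  have hr0 : (0:ℝ) < Real.sqrt 3 := Real.sqrt_pos.mpr (by norm_num)
  have hr2 : (Real.sqrt 3)^2 = 3 := Real.sq_sqrt (by norm_num)
  have hs0 : (0:ℝ) < Real.sqrt (2*ε) := Real.sqrt_pos.mpr (by linarith)
  have hs2 : (Real.sqrt (2*ε))^2 = 2*ε := Real.sq_sqrt (by linarith)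
  set r := Real.sqrt 3 with hrdef
  set s := Real.sqrt (2*ε) with hsdef
  set t := 1/r with htdef
  have ht0 : 0 < t := by positivity
  have ht2 : t^2 = 1/3 := by rw [htdef, div_pow, hr2]; norm_num
  -- extract the linear equations
  rw [hℓ] at h₁ h₂ h₃
  simp only [Prod.fst, Prod.snd] at h₁ h₂ h₃
  have hw : w = ε/3 := by linarith [h₁]
  have huv : u * (s*t) = v * (s*t) := by linear_combination (1/2)*h₂ - (1/2)*h₃
  have huv' : u = v := mul_right_cancel₀ (by positivity) huv
  have hsum : (u + v) * s = (4*s/3) * s := by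
    linear_combination (1/2)*h₂ + (1/2)*h₃ - hw - 2*s^2*ht2
  have hsum' : u + v = 4*s/3 := mul_right_cancel₀ hs0.ne' hsum
  have hu : u = 2*s/3 := by linarith
  have hv : v = 2*s/3 := by linarith
  refine ⟨?_, ⟨?_, ?_⟩, ?_⟩
  · -- area
    have harea : (s*(1+t) - 0)*(s*(1+t) - 0) - (s*(1-t) - 0)*(s*(1-t) - 0) = 8*ε*t := by
      linear_combination 4*t*hs2
    simp only [Prod.fst, Prod.snd]
    rw [harea, abs_of_pos (by positivity)]
    rw [htdef]; field_simp; ring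
  · -- ε is attained at (s,s), the midpoint of p₂p₃
    refine ⟨(s, s), ?_, ?_⟩
    · have hmem2 : ((s:ℝ), s) ∈ segment ℝ ((s*(1+t), s*(1-t)) : ℝ × ℝ) (s*(1-t), s*(1+t)) := by
        refine ⟨1/2, 1/2, by norm_num, by norm_num, by norm_num, ?_⟩
        simp only [Prod.smul_mk, Prod.mk_add_mk, smul_eq_mul, Prod.mk.injEq]
        exact ⟨by ring, by ring⟩
      have h1 : convexHull ℝ ({((0:ℝ),(0:ℝ)), (s*(1+t), s*(1-t)), (s*(1-t), s*(1+t))} : Set (ℝ × ℝ))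
          = convexJoin ℝ {((0:ℝ),(0:ℝ))} (convexHull ℝ ({(s*(1+t), s*(1-t)), (s*(1-t), s*(1+t))} : Set (ℝ × ℝ))) := convexHull_insert (Set.insert_nonempty _ _)
      rw [h1, convexHull_pair, mem_convexJoin]
      exact ⟨((0:ℝ),(0:ℝ)), rfl, (s, s), hmem2, right_mem_segment ℝ _ _⟩
    · rw [hℓ]
      have : u*(s,s).1 + v*(s,s).2 + w - 2*(s,s).1*(s,s).2 = -ε := by
        simp only [Prod.fst, Prod.snd]
        linear_combination s*hu + s*hv + hw - (2/3)*hs2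
      rw [this, abs_neg, abs_of_pos hε]
  · -- upper bound
    rintro E ⟨q, hq, rfl⟩
    have h1 : convexHull ℝ ({((0:ℝ),(0:ℝ)), (s*(1+t), s*(1-t)), (s*(1-t), s*(1+t))} : Set (ℝ × ℝ))
        = convexJoin ℝ {((0:ℝ),(0:ℝ))} (convexHull ℝ ({(s*(1+t), s*(1-t)), (s*(1-t), s*(1+t))} : Set (ℝ × ℝ))) := convexHull_insert (Set.insert_nonempty _ _)
    rw [h1, convexHull_pair, mem_convexJoin] at hq
    obtain ⟨z₀, hz₀, z, hz, hqz⟩ := hq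
    rw [Set.mem_singleton_iff] at hz₀
    subst hz₀
    obtain ⟨c, d, hc, hd, hcd, rfl⟩ := hz
    obtain ⟨a, b, ha, hb, hab, rfl⟩ := hqz
    have hd' : d = 1 - c := by linarith
    subst hd'
    have hb' : b ≤ 1 := by linarith
    have hq1 : (a • ((0:ℝ),(0:ℝ)) + b • (c • ((s*(1+t), s*(1-t)) : ℝ × ℝ)
        + (1-c) • ((s*(1-t), s*(1+t)) : ℝ × ℝ))).1
        = b*(c*(s*(1+t)) + (1-c)*(s*(1-t))) := by
      simp only [Prod.smul_mk, Prod.mk_add_mk, Prod.fst, smul_eq_mul]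
      ring
    have hq2 : (a • ((0:ℝ),(0:ℝ)) + b • (c • ((s*(1+t), s*(1-t)) : ℝ × ℝ)
        + (1-c) • ((s*(1-t), s*(1+t)) : ℝ × ℝ))).2
        = b*(c*(s*(1-t)) + (1-c)*(s*(1+t))) := by
      simp only [Prod.smul_mk, Prod.mk_add_mk, Prod.snd, smul_eq_mul]
      ring
    rw [hℓ, hq1, hq2, hu, hv, hw]
    set Q1 := b*(c*(s*(1+t)) + (1-c)*(s*(1-t))) with hQ1
    set Q2 := b*(c*(s*(1-t)) + (1-c)*(s*(1+t))) with hQ2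
    rw [abs_le]
    constructor
    · -- lower bound: g + ε ≥ 0
      have key : (2*s/3)*Q1 + (2*s/3)*Q2 + ε/3 - 2*Q1*Q2 + ε
          = 2*s^2*(1-b)*(b+1/3) + (2/3)*(s*b*(2*c-1))^2 := by
        rw [hQ1, hQ2]
        linear_combination (2*b^2*s^2*(2*c-1)^2)*ht2 - (2/3)*hs2
      linarith [sq_nonneg (s*b*(2*c-1)), mul_nonneg (mul_nonneg (sq_nonneg s) (by linarith : (0:ℝ) ≤ 1-b)) (by linarith : (0:ℝ) ≤ b+1/3), key]
    · -- upper bound: ε - g ≥ 0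
      have key : ε - ((2*s/3)*Q1 + (2*s/3)*Q2 + ε/3 - 2*Q1*Q2)
          = (1/3)*(s*(1-2*b))^2 + (8/3)*(c*(1-c))*(s*b)^2 := by
        rw [hQ1, hQ2]
        linear_combination (-2*b^2*s^2*(2*c-1)^2)*ht2 - (1/3)*hs2
      linarith [sq_nonneg (s*(1-2*b)), mul_nonneg (mul_nonneg hc (by linarith : (0:ℝ) ≤ 1-c)) (sq_nonneg (s*b)), key]
  · -- 4ε/√3 > ε√5
    have h5 : (Real.sqrt 5)^2 = 5 := Real.sq_sqrt (by norm_num)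
    have h5p : (0:ℝ) ≤ Real.sqrt 5 := Real.sqrt_nonneg 5
    have h15 : Real.sqrt 5 * r < 4 := by nlinarith [mul_nonneg h5p hr0.le]
    rw [gt_iff_lt, lt_div_iff₀ hr0]
    nlinarith [mul_pos hε hr0]
end

section
/- Fix ε > 0 and let f(x,y) = 2xy. Let p₁, p₂, p₃ ∈ ℝ², let T be their convex hull, let Δz ∈ ℝ, and let ℓ be an affine function with ℓ(pᵢ) = f(pᵢ) + Δz for i = 1,2,3. If sup over (x,y) ∈ T of |ℓ(x,y) − f(x,y)| ≤ ε, then the area of the triangle p₁p₂p₃ is at most 4ε/√3. -/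
private lemma key_red (x y t e : ℝ) (hx1 : -e ≤ x) (hx2 : x ≤ e) (hy1 : -e ≤ y) (hy2 : y ≤ e) :
    3*(x+y-t+e)^2 - 12*(x-t)*(y-t) ≤ 16*e^2 := by
  nlinarith [sq_nonneg (3*t+e-x-y), mul_nonneg (by linarith : (0:ℝ) ≤ e+x) (by linarith : (0:ℝ) ≤ e-y), mul_nonneg (by linarith : (0:ℝ) ≤ e-x) (by linarith : (0:ℝ) ≤ e+y), mul_nonneg (by linarith : (0:ℝ) ≤ e+x) (by linarith : (0:ℝ) ≤ e+y), mul_nonneg (by linarith : (0:ℝ) ≤ e-x) (by linarith : (0:ℝ) ≤ e-y)]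

private lemma key_full (x y z t e : ℝ) (hx : |x| ≤ e) (hy : |y| ≤ e) (hz : |z| ≤ e) :
    3*(x+y-z-t)^2 - 12*(x-t)*(y-t) ≤ 16*e^2 := by
  rw [abs_le] at hx hy hz
  rcases le_total 0 (x+y-t) with hs | hs
  · have h1 := key_red x y t e hx.1 hx.2 hy.1 hy.2
    nlinarith [mul_nonneg (by linarith : (0:ℝ) ≤ e+z) (by linarith : (0:ℝ) ≤ 2*(x+y-t)+e-z)]
  · have h1 := key_red (-x) (-y) (-t) e (by linarith) (by linarith) (by linarith) (by linarith)
    nlinarith [mul_nonneg (by linarith : (0:ℝ) ≤ e-z) (by linarith : (0:ℝ) ≤ e+z-2*(x+y-t))]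

/-- Optimality: any triangle whose vertices have a common vertical offset Δz from the
saddle f(x,y) = 2xy, such that the vertical error of the corresponding affine function
over the triangle is at most ε, has area at most 4ε/√3. -/
theorem stmt_11 (ε : ℝ) (hε : 0 < ε) (Δz : ℝ) (p₁ p₂ p₃ : ℝ × ℝ)
    (ℓ : ℝ × ℝ → ℝ) (u v w : ℝ) (hℓ : ∀ q : ℝ × ℝ, ℓ q = u*q.1 + v*q.2 + w)
    (h₁ : ℓ p₁ = 2*p₁.1*p₁.2 + Δz) (h₂ : ℓ p₂ = 2*p₂.1*p₂.2 + Δz)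
    (h₃ : ℓ p₃ = 2*p₃.1*p₃.2 + Δz)
    (herr : ∀ q ∈ convexHull ℝ ({p₁, p₂, p₃} : Set (ℝ × ℝ)), |ℓ q - 2*q.1*q.2| ≤ ε) :
    (1/2) * |(p₂.1-p₁.1)*(p₃.2-p₁.2) - (p₃.1-p₁.1)*(p₂.2-p₁.2)| ≤ 4*ε/Real.sqrt 3 := by
  -- vertex equations in coordinates
  have e1 : u*p₁.1 + v*p₁.2 + w = 2*p₁.1*p₁.2 + Δz := by rw [← hℓ]; exact h₁
  have e2 : u*p₂.1 + v*p₂.2 + w = 2*p₂.1*p₂.2 + Δz := by rw [← hℓ]; exact h₂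
  have e3 : u*p₃.1 + v*p₃.2 + w = 2*p₃.1*p₃.2 + Δz := by rw [← hℓ]; exact h₃
  -- vertices are in the hull
  have hp1 : p₁ ∈ convexHull ℝ ({p₁, p₂, p₃} : Set (ℝ × ℝ)) :=
    subset_convexHull ℝ _ (by simp)
  -- midpoints are in the hull
  have hmid : ∀ a b : ℝ × ℝ, a ∈ ({p₁, p₂, p₃} : Set (ℝ × ℝ)) →
      b ∈ ({p₁, p₂, p₃} : Set (ℝ × ℝ)) →
      (((a.1+b.1)/2, (a.2+b.2)/2) : ℝ × ℝ) ∈ convexHull ℝ ({p₁, p₂, p₃} : Set (ℝ × ℝ)) := by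
    intro a b ha hb
    refine segment_subset_convexHull ha hb ⟨1/2, 1/2, by norm_num, by norm_num, by norm_num, ?_⟩
    simp [Prod.ext_iff, Prod.smul_fst, Prod.smul_snd, smul_eq_mul]
    constructor <;> ring
  -- error at a vertex
  have ht : |Δz| ≤ ε := by
    have h := herr p₁ hp1
    rwa [h₁, show 2*p₁.1*p₁.2 + Δz - 2*p₁.1*p₁.2 = Δz by ring] at h
  -- error at midpoints
  have mid_err : ∀ a b : ℝ × ℝ,
      (u*a.1 + v*a.2 + w = 2*a.1*a.2 + Δz) → (u*b.1 + v*b.2 + w = 2*b.1*b.2 + Δz) →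
      a ∈ ({p₁, p₂, p₃} : Set (ℝ × ℝ)) → b ∈ ({p₁, p₂, p₃} : Set (ℝ × ℝ)) →
      |Δz + (a.1-b.1)*(a.2-b.2)/2| ≤ ε := by
    intro a b ea eb ha hb
    have h := herr _ (hmid a b ha hb)
    rw [hℓ] at h
    have hq : u*((a.1+b.1)/2) + v*((a.2+b.2)/2) + w - 2*((a.1+b.1)/2)*((a.2+b.2)/2)
        = Δz + (a.1-b.1)*(a.2-b.2)/2 := by linear_combination ea/2 + eb/2
    rwa [hq] at h
  have hx := mid_err p₁ p₂ e1 e2 (by simp) (by simp)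
  have hy := mid_err p₁ p₃ e1 e3 (by simp) (by simp)
  have hz := mid_err p₂ p₃ e2 e3 (by simp) (by simp)
  set A := (p₁.1-p₂.1)*(p₁.2-p₂.2)/2 with hA
  set B := (p₁.1-p₃.1)*(p₁.2-p₃.2)/2 with hB
  set C := (p₂.1-p₃.1)*(p₂.2-p₃.2)/2 with hC
  set D := (p₂.1-p₁.1)*(p₃.2-p₁.2) - (p₃.1-p₁.1)*(p₂.2-p₁.2) with hD
  have hkey := key_full (Δz + A) (Δz + B) (Δz + C) Δz ε hx hy hz
  -- polynomial identity: D^2 = 4(A+B-C)^2 - 16 A B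
  have hid : D^2 = 4*((Δz+A)+(Δz+B)-(Δz+C)-Δz)^2 - 16*((Δz+A)-Δz)*((Δz+B)-Δz) := by
    rw [hD, hA, hB, hC]; ring
  have hDsq : 3 * D^2 ≤ 64 * ε^2 := by nlinarith [hkey, hid]
  have h3 : (0:ℝ) < Real.sqrt 3 := Real.sqrt_pos.2 (by norm_num)
  rw [le_div_iff₀ h3]
  have hsq : Real.sqrt 3 ^ 2 = 3 := Real.sq_sqrt (by norm_num)
  nlinarith [hDsq, abs_nonneg D, sq_abs D, mul_nonneg (abs_nonneg D) h3.le, hε, hsq, sq_nonneg (|D| * Real.sqrt 3 - 8*ε)]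
end

section
/- Fix ε > 0 and let f(x,y) = x² + y². Let p₁, p₂, p₃ ∈ ℝ² be affinely independent, let T be their convex hull, and let ℓ be the affine function with ℓ(pᵢ) = f(pᵢ) for i = 1,2,3. If sup over (x,y) ∈ T of |ℓ(x,y) − f(x,y)| ≤ ε, then the area of T is at most (3√3/4)·ε. -/
lemma stmt_16_aux (a1 a2 b1 b2 ε : ℝ) (hε : 0 < ε)
    (hS : a1^2+a2^2+b1^2+b2^2+(a1-b1)^2+(a2-b2)^2 ≤ 9*ε) :
    (1/2) * |a1*b2 - b1*a2| ≤ 3 * Real.sqrt 3 / 4 * ε := by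
  set S : ℝ := a1^2+a2^2+b1^2+b2^2+(a1-b1)^2+(a2-b2)^2 with hSdef
  have hS0 : 0 ≤ S := by positivity
  have h12 : 12*(a1*b2 - b1*a2)^2 ≤ S^2 := by
    rw [hSdef]
    nlinarith [sq_nonneg (4*(a1*b1+a2*b2) - (a1^2+a2^2+b1^2+b2^2)),
      sq_nonneg (a1^2+a2^2-b1^2-b2^2),
      (by ring : (a1^2+a2^2)*(b1^2+b2^2) = (a1*b1+a2*b2)^2 + (a1*b2-b1*a2)^2)]
  have hsq3 : Real.sqrt 3 ^ 2 = 3 := Real.sq_sqrt (by norm_num)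
  have h3pos : 0 < Real.sqrt 3 := Real.sqrt_pos.mpr (by norm_num)
  have habs : 0 ≤ |a1*b2 - b1*a2| := abs_nonneg _
  have hD : 2 * Real.sqrt 3 * |a1*b2 - b1*a2| ≤ S := by
    nlinarith [h12, sq_abs (a1*b2 - b1*a2), hsq3, h3pos, habs, hS0,
      sq_nonneg (2 * Real.sqrt 3 * |a1*b2 - b1*a2| - S)]
  have hD2 : 2 * Real.sqrt 3 * |a1*b2 - b1*a2| ≤ 9*ε := hD.trans hS
  nlinarith [mul_le_mul_of_nonneg_left hD2 h3pos.le, hsq3, h3pos]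

/-- Optimal interpolating approximation of the paraboloid f(x,y) = x² + y²: any
triangle on which the interpolating affine function has vertical error ≤ ε has area
at most (3√3/4)·ε. -/
theorem stmt_16 (ε : ℝ) (hε : 0 < ε) (p₁ p₂ p₃ : ℝ × ℝ)
    (hind : ¬ Collinear ℝ ({p₁, p₂, p₃} : Set (ℝ × ℝ)))
    (ℓ : ℝ × ℝ → ℝ) (u v w : ℝ) (hℓ : ∀ q : ℝ × ℝ, ℓ q = u*q.1 + v*q.2 + w)
    (h₁ : ℓ p₁ = p₁.1^2 + p₁.2^2) (h₂ : ℓ p₂ = p₂.1^2 + p₂.2^2)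
    (h₃ : ℓ p₃ = p₃.1^2 + p₃.2^2)
    (herr : ∀ q ∈ convexHull ℝ ({p₁, p₂, p₃} : Set (ℝ × ℝ)),
      |ℓ q - (q.1^2 + q.2^2)| ≤ ε) :
    (1/2) * |(p₂.1-p₁.1)*(p₃.2-p₁.2) - (p₃.1-p₁.1)*(p₂.2-p₁.2)|
      ≤ 3 * Real.sqrt 3 / 4 * ε := by
  -- interpolation equations
  have e1 : u*p₁.1 + v*p₁.2 + w = p₁.1^2 + p₁.2^2 := (hℓ p₁).symm.trans h₁
  have e2 : u*p₂.1 + v*p₂.2 + w = p₂.1^2 + p₂.2^2 := (hℓ p₂).symm.trans h₂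
  have e3 : u*p₃.1 + v*p₃.2 + w = p₃.1^2 + p₃.2^2 := (hℓ p₃).symm.trans h₃
  -- the centroid lies in the hull
  set c : ℝ × ℝ := ((p₁.1+p₂.1+p₃.1)/3, (p₁.2+p₂.2+p₃.2)/3) with hcdef
  have hconv : Convex ℝ (convexHull ℝ ({p₁, p₂, p₃} : Set (ℝ × ℝ))) :=
    convex_convexHull ℝ _
  have hp1 : p₁ ∈ convexHull ℝ ({p₁, p₂, p₃} : Set (ℝ × ℝ)) :=
    subset_convexHull ℝ _ (by simp)
  have hp2 : p₂ ∈ convexHull ℝ ({p₁, p₂, p₃} : Set (ℝ × ℝ)) :=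
    subset_convexHull ℝ _ (by simp)
  have hp3 : p₃ ∈ convexHull ℝ ({p₁, p₂, p₃} : Set (ℝ × ℝ)) :=
    subset_convexHull ℝ _ (by simp)
  have hm : (1/2 : ℝ) • p₂ + (1/2 : ℝ) • p₃ ∈ convexHull ℝ ({p₁, p₂, p₃} : Set (ℝ × ℝ)) :=
    hconv hp2 hp3 (by norm_num) (by norm_num) (by norm_num)
  have hcmem' : (1/3 : ℝ) • p₁ + (2/3 : ℝ) • ((1/2 : ℝ) • p₂ + (1/2 : ℝ) • p₃)
      ∈ convexHull ℝ ({p₁, p₂, p₃} : Set (ℝ × ℝ)) :=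
    hconv hp1 hm (by norm_num) (by norm_num) (by norm_num)
  have hceq : (1/3 : ℝ) • p₁ + (2/3 : ℝ) • ((1/2 : ℝ) • p₂ + (1/2 : ℝ) • p₃) = c := by
    rw [hcdef]
    apply Prod.ext <;> simp [Prod.smul_def] <;> ring
  rw [hceq] at hcmem'
  have he := herr c hcmem'
  -- compute the error at the centroid
  have key : ℓ c - (c.1^2 + c.2^2)
      = ((p₂.1-p₁.1)^2+(p₂.2-p₁.2)^2+(p₃.1-p₁.1)^2+(p₃.2-p₁.2)^2
         +((p₂.1-p₁.1)-(p₃.1-p₁.1))^2+((p₂.2-p₁.2)-(p₃.2-p₁.2))^2)/9 := by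
    rw [hℓ c, hcdef]
    dsimp only
    linear_combination (e1 + e2 + e3)/3
  rw [key] at he
  have hSnn : 0 ≤ (p₂.1-p₁.1)^2+(p₂.2-p₁.2)^2+(p₃.1-p₁.1)^2+(p₃.2-p₁.2)^2
      +((p₂.1-p₁.1)-(p₃.1-p₁.1))^2+((p₂.2-p₁.2)-(p₃.2-p₁.2))^2 := by positivity
  rw [abs_of_nonneg (by positivity)] at he
  exact stmt_16_aux (p₂.1-p₁.1) (p₂.2-p₁.2) (p₃.1-p₁.1) (p₃.2-p₁.2) ε hε (by linarith)
end

section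
/- Fix ε > 0 and let f(x,y) = x² + y². Let p₁, p₂, p₃ ∈ ℝ², let T be their convex hull, and let ℓ be any affine function on ℝ². If sup over (x,y) ∈ T of |ℓ(x,y) − f(x,y)| ≤ ε, then the area of T is at most (3√3/2)·ε. -/
/-- Optimal non-interpolating approximation of the paraboloid f(x,y) = x² + y²: any
triangle over which some affine function ℓ has vertical error ≤ ε has area at most
(3√3/2)·ε. -/
theorem stmt_18 (ε : ℝ) (hε : 0 < ε) (p₁ p₂ p₃ : ℝ × ℝ)
    (ℓ : ℝ × ℝ → ℝ) (u v w : ℝ) (hℓ : ∀ q : ℝ × ℝ, ℓ q = u*q.1 + v*q.2 + w)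
    (herr : ∀ q ∈ convexHull ℝ ({p₁, p₂, p₃} : Set (ℝ × ℝ)),
      |ℓ q - (q.1^2 + q.2^2)| ≤ ε) :
    (1/2) * |(p₂.1-p₁.1)*(p₃.2-p₁.2) - (p₃.1-p₁.1)*(p₂.2-p₁.2)|
      ≤ 3 * Real.sqrt 3 / 2 * ε := by
  have hs2 : Real.sqrt 3 ^ 2 = 3 := Real.sq_sqrt (by norm_num)
  have hs0 : (0:ℝ) < Real.sqrt 3 := Real.sqrt_pos.mpr (by norm_num)
  set s := Real.sqrt 3 with hsdef
  have hp₁ : p₁ ∈ convexHull ℝ ({p₁, p₂, p₃} : Set (ℝ × ℝ)) :=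
    subset_convexHull ℝ _ (by simp)
  have hp₂ : p₂ ∈ convexHull ℝ ({p₁, p₂, p₃} : Set (ℝ × ℝ)) :=
    subset_convexHull ℝ _ (by simp)
  have hp₃ : p₃ ∈ convexHull ℝ ({p₁, p₂, p₃} : Set (ℝ × ℝ)) :=
    subset_convexHull ℝ _ (by simp)
  have hconv : Convex ℝ (convexHull ℝ ({p₁, p₂, p₃} : Set (ℝ × ℝ))) :=
    convex_convexHull ℝ _
  have hq := hconv hp₂ hp₃ (by norm_num : (0:ℝ) ≤ 1/2) (by norm_num : (0:ℝ) ≤ 1/2)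
    (by norm_num)
  have hm0 := hconv hp₁ hq (by norm_num : (0:ℝ) ≤ 1/3) (by norm_num : (0:ℝ) ≤ 2/3)
    (by norm_num)
  set m : ℝ × ℝ := ((p₁.1+p₂.1+p₃.1)/3, (p₁.2+p₂.2+p₃.2)/3) with hmdef
  have hmeq : (1/3:ℝ) • p₁ + (2/3:ℝ) • ((1/2:ℝ) • p₂ + (1/2:ℝ) • p₃) = m := by
    apply Prod.ext <;> simp [hmdef] <;> ring
  have hm : m ∈ convexHull ℝ ({p₁, p₂, p₃} : Set (ℝ × ℝ)) := hmeq ▸ hm0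
  have E1 := abs_le.mp (herr p₁ hp₁)
  have E2 := abs_le.mp (herr p₂ hp₂)
  have E3 := abs_le.mp (herr p₃ hp₃)
  have Em := abs_le.mp (herr m hm)
  simp only [hℓ, hmdef] at E1 E2 E3 Em
  -- N = |a|² + |b|² - a·b with a = p₂ - p₁, b = p₃ - p₁; 2N = sum of squared edges
  have hNle : (p₂.1-p₁.1)^2+(p₂.2-p₁.2)^2+(p₃.1-p₁.1)^2+(p₃.2-p₁.2)^2
      - ((p₂.1-p₁.1)*(p₃.1-p₁.1)+(p₂.2-p₁.2)*(p₃.2-p₁.2)) ≤ 9*ε := by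
    linarith [Em.2, E1.1, E2.1, E3.1]
  set D := (p₂.1-p₁.1)*(p₃.2-p₁.2) - (p₃.1-p₁.1)*(p₂.2-p₁.2) with hD
  have key₁ : (p₂.1-p₁.1)^2+(p₂.2-p₁.2)^2+(p₃.1-p₁.1)^2+(p₃.2-p₁.2)^2
      - ((p₂.1-p₁.1)*(p₃.1-p₁.1)+(p₂.2-p₁.2)*(p₃.2-p₁.2)) - s * D
      = ((p₂.1-p₁.1) - ((p₃.1-p₁.1) + s*(p₃.2-p₁.2))/2)^2
        + ((p₂.2-p₁.2) - ((p₃.2-p₁.2) - s*(p₃.1-p₁.1))/2)^2 := by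
    linear_combination (-((p₃.1-p₁.1)^2+(p₃.2-p₁.2)^2)/4) * hs2
  have key₂ : (p₂.1-p₁.1)^2+(p₂.2-p₁.2)^2+(p₃.1-p₁.1)^2+(p₃.2-p₁.2)^2
      - ((p₂.1-p₁.1)*(p₃.1-p₁.1)+(p₂.2-p₁.2)*(p₃.2-p₁.2)) + s * D
      = ((p₂.1-p₁.1) - ((p₃.1-p₁.1) - s*(p₃.2-p₁.2))/2)^2
        + ((p₂.2-p₁.2) - ((p₃.2-p₁.2) + s*(p₃.1-p₁.1))/2)^2 := by
    linear_combination (-((p₃.1-p₁.1)^2+(p₃.2-p₁.2)^2)/4) * hs2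
  clear E1 E2 E3 Em herr hℓ
  have pos₁ : 0 ≤ (p₂.1-p₁.1)^2+(p₂.2-p₁.2)^2+(p₃.1-p₁.1)^2+(p₃.2-p₁.2)^2
      - ((p₂.1-p₁.1)*(p₃.1-p₁.1)+(p₂.2-p₁.2)*(p₃.2-p₁.2)) - s * D := by
    rw [key₁]; positivity
  have pos₂ : 0 ≤ (p₂.1-p₁.1)^2+(p₂.2-p₁.2)^2+(p₃.1-p₁.1)^2+(p₃.2-p₁.2)^2
      - ((p₂.1-p₁.1)*(p₃.1-p₁.1)+(p₂.2-p₁.2)*(p₃.2-p₁.2)) + s * D := by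
    rw [key₂]; positivity
  have h1 : s * D ≤ 9 * ε := by linarith
  have h2 : -(s * D) ≤ 9 * ε := by linarith
  have habs : s * |D| ≤ 9 * ε := by
    rcases abs_cases D with ⟨h, _⟩ | ⟨h, _⟩ <;> rw [h] <;> [exact h1; linarith [h2]]
  clear h1 h2 key₁ key₂ hNle
  nlinarith [habs, abs_nonneg D, hs0, hs2, mul_pos hs0 hε]
end

section
/- Fix ε > 0 and let f(x,y) = x² + y². Let pₖ = (√(2ε)·cos(2πk/3), √(2ε)·sin(2πk/3)) for k = 0,1,2, let T be their convex hull, and let ℓ be the constant function ℓ(x,y) = ε. Then: (i) the area of T equals (3√3/2)·ε; and (ii) sup over (x,y) ∈ T of |ℓ(x,y) − f(x,y)| equals ε. Hence the bound (3√3/2)·ε for non-interpolating approximation of f with vertical error ε over a single triangle is attained. -/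
/-- The bound (3√3/2)·ε for non-interpolating approximation of the paraboloid
f(x,y) = x² + y² is attained: an equilateral triangle inscribed in the circle of
radius √(2ε), with the constant function ℓ = ε, has area (3√3/2)·ε and maximal
vertical error exactly ε. -/
theorem stmt_19 (ε : ℝ) (hε : 0 < ε) (p₀ p₁ p₂ : ℝ × ℝ)
    (hp₀ : p₀ = (Real.sqrt (2*ε) * Real.cos (2*Real.pi*0/3),
                 Real.sqrt (2*ε) * Real.sin (2*Real.pi*0/3)))
    (hp₁ : p₁ = (Real.sqrt (2*ε) * Real.cos (2*Real.pi*1/3),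
                 Real.sqrt (2*ε) * Real.sin (2*Real.pi*1/3)))
    (hp₂ : p₂ = (Real.sqrt (2*ε) * Real.cos (2*Real.pi*2/3),
                 Real.sqrt (2*ε) * Real.sin (2*Real.pi*2/3)))
    (ℓ : ℝ × ℝ → ℝ) (hℓ : ∀ q : ℝ × ℝ, ℓ q = ε) :
    (1/2) * |(p₁.1-p₀.1)*(p₂.2-p₀.2) - (p₂.1-p₀.1)*(p₁.2-p₀.2)|
      = 3 * Real.sqrt 3 / 2 * ε ∧
    IsGreatest {E : ℝ | ∃ q ∈ convexHull ℝ ({p₀, p₁, p₂} : Set (ℝ × ℝ)),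
        E = |ℓ q - (q.1^2 + q.2^2)|} ε := by
  set r := Real.sqrt (2*ε) with hr
  have hr0 : 0 ≤ r := Real.sqrt_nonneg _
  have hr2 : r^2 = 2*ε := Real.sq_sqrt (by linarith)
  have s3 : (0:ℝ) ≤ Real.sqrt 3 := Real.sqrt_nonneg _
  have s3sq : Real.sqrt 3 ^ 2 = 3 := Real.sq_sqrt (by norm_num)
  have c0 : Real.cos (2*Real.pi*0/3) = 1 := by norm_num
  have s0 : Real.sin (2*Real.pi*0/3) = 0 := by norm_num
  have e1 : 2*Real.pi*1/3 = Real.pi - Real.pi/3 := by ring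
  have e2 : 2*Real.pi*2/3 = Real.pi + Real.pi/3 := by ring
  have c1 : Real.cos (2*Real.pi*1/3) = -(1/2) := by
    rw [e1, Real.cos_pi_sub, Real.cos_pi_div_three]
  have s1 : Real.sin (2*Real.pi*1/3) = Real.sqrt 3 / 2 := by
    rw [e1, Real.sin_pi_sub, Real.sin_pi_div_three]
  have c2 : Real.cos (2*Real.pi*2/3) = -(1/2) := by
    rw [e2, Real.cos_add, Real.cos_pi, Real.sin_pi, Real.cos_pi_div_three]; ring
  have s2 : Real.sin (2*Real.pi*2/3) = -(Real.sqrt 3 / 2) := by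
    rw [e2, Real.sin_add, Real.cos_pi, Real.sin_pi, Real.sin_pi_div_three]; ring
  subst hp₀ hp₁ hp₂
  rw [c0, s0, c1, s1, c2, s2]
  constructor
  · have : (r * -(1/2) - r * 1) * (r * -(Real.sqrt 3/2) - r * 0)
        - (r * -(1/2) - r * 1) * (r * (Real.sqrt 3/2) - r * 0)
        = 3 * Real.sqrt 3 / 2 * r^2 := by ring
    simp only [this]
    rw [abs_of_nonneg (by positivity), hr2]; ring
  · constructor
    · -- ε is attained at the origin, the centroid of the triangle
      refine ⟨(0,0), ?_, ?_⟩
      · have hC := convex_convexHull ℝ ({(r*1, r*0), (r*-(1/2), r*(Real.sqrt 3/2)),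
          (r*-(1/2), r*-(Real.sqrt 3/2))} : Set (ℝ × ℝ))
        have h0 : ((r*1, r*0) : ℝ × ℝ) ∈ convexHull ℝ ({(r*1, r*0),
            (r*-(1/2), r*(Real.sqrt 3/2)), (r*-(1/2), r*-(Real.sqrt 3/2))} : Set (ℝ × ℝ)) :=
          subset_convexHull ℝ _ (by simp)
        have h1 : ((r*-(1/2), r*(Real.sqrt 3/2)) : ℝ × ℝ) ∈ convexHull ℝ ({(r*1, r*0),
            (r*-(1/2), r*(Real.sqrt 3/2)), (r*-(1/2), r*-(Real.sqrt 3/2))} : Set (ℝ × ℝ)) :=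
          subset_convexHull ℝ _ (by simp)
        have h2 : ((r*-(1/2), r*-(Real.sqrt 3/2)) : ℝ × ℝ) ∈ convexHull ℝ ({(r*1, r*0),
            (r*-(1/2), r*(Real.sqrt 3/2)), (r*-(1/2), r*-(Real.sqrt 3/2))} : Set (ℝ × ℝ)) :=
          subset_convexHull ℝ _ (by simp)
        have hm := hC h1 h2 (by norm_num : (0:ℝ) ≤ 1/2) (by norm_num : (0:ℝ) ≤ 1/2)
          (by norm_num)
        have hfin := hC h0 hm (by norm_num : (0:ℝ) ≤ 1/3) (by norm_num : (0:ℝ) ≤ 2/3)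
          (by norm_num)
        convert hfin using 1
        ext <;> simp [Prod.smul_def] <;> ring
      · rw [hℓ]
        simp [abs_of_nonneg hε.le]
    · -- upper bound
      rintro E ⟨q, hq, rfl⟩
      rw [hℓ]
      have hsub : convexHull ℝ ({(r*1, r*0), (r*-(1/2), r*(Real.sqrt 3/2)),
          (r*-(1/2), r*-(Real.sqrt 3/2))} : Set (ℝ × ℝ))
          ⊆ {q : ℝ × ℝ | q.1^2 + q.2^2 ≤ 2*ε} := by
        apply convexHull_min
        · intro x hx
          simp only [Set.mem_insert_iff, Set.mem_singleton_iff] at hx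
          rcases hx with rfl | rfl | rfl <;> simp only [Set.mem_setOf_eq] <;>
            nlinarith [s3sq, hr2]
        · intro a ha b hb t s ht hs hts
          simp only [Set.mem_setOf_eq] at ha hb ⊢
          simp only [Prod.fst_add, Prod.snd_add, Prod.smul_fst, Prod.smul_snd,
            smul_eq_mul]
          have key : (t*a.1+s*b.1)^2+(t*a.2+s*b.2)^2
              ≤ t*(a.1^2+a.2^2)+s*(b.1^2+b.2^2) := by
            nlinarith [mul_nonneg (mul_nonneg ht hs) (sq_nonneg (a.1 - b.1)),
              mul_nonneg (mul_nonneg ht hs) (sq_nonneg (a.2 - b.2))]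
          have h2 : t*(a.1^2+a.2^2)+s*(b.1^2+b.2^2) ≤ (t+s)*(2*ε) := by
            rw [add_mul]
            exact add_le_add (mul_le_mul_of_nonneg_left ha ht)
              (mul_le_mul_of_nonneg_left hb hs)
          rw [hts, one_mul] at h2
          linarith
      have hle : q.1^2 + q.2^2 ≤ 2*ε := hsub hq
      have hge : 0 ≤ q.1^2 + q.2^2 := by positivity
      rw [abs_le]; constructor <;> linarith
end
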